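/- Let s > 0, and for n ≥ 3 set t_n = 8π/(11·2^n) and ε_n = (8/(11π))·2^{−n}. Let f(x) = Σ_{j=3}^∞ 2^{−js} cos((11/8)·2^j·x) and F_n(t,x) = Σ_{j=3}^∞ 2^{−js} e^{−ε_n(121/64)·2^{2j}·t} cos((11/8)·2^j·(x − t)). Then for every real p with 1 ≤ p < ∞ and every n ≥ 3: 2^{ns} · ( ∫₀^{2π} |F_n(t_n, x) − f(x − t_n)|^p dx )^{1/p} ≥ (2π)^{1/p}·(1 − e^{−1})/2, even though t_n → 0⁺ and ε_n → 0⁺ as n → ∞. -/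

import Mathlib

/-!
With the integer frequencies `ω_j = (11/8)·2^(j+3) = 11·2^j`, the difference
`G = F_n(t_n,·) - f(·-t_n)` is the cosine series `∑ c_j cos(ω_j (x - t_n))` with
`c_j = 2^{-(j+3)s} (e^{-ε_n ω_j² t_n} - 1)`. Since `ε_n ω_{n-3}² t_n = 1`, the coefficient of the
mode `n - 3` is `-2^{-ns} (1 - e^{-1})`. Orthogonality of the cosines on `[0, 2π]` gives
`π c_m = ∫ G(x) cos(ω_m (x - t_n)) dx`, hence `π |c_m| ≤ ‖G‖₁ ≤ (2π)^{1-1/p} ‖G‖_p` by Hölder.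
-/

open Real Filter MeasureTheory Topology

theorem abs_mul_cos_le (c θ : ℝ) : |c * cos θ| ≤ |c| := by
  rw [abs_mul]
  exact mul_le_of_le_one_right (abs_nonneg c) (abs_cos_le_one θ)

theorem Summable.mul_of_abs_le_one {a b : ℕ → ℝ} (ha : Summable a) (hb : ∀ j, |b j| ≤ 1) :
    Summable fun j => a j * b j :=
  ha.abs.of_norm_bounded fun j => by
    simpa only [norm_mul, Real.norm_eq_abs] using mul_le_of_le_one_right (abs_nonneg _) (hb j)

theorem summable_rpow_neg_add_mul {b s : ℝ} (hb : 1 < b) (hs : 0 < s) (k : ℝ) :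
    Summable fun j : ℕ => b ^ (-((j : ℝ) + k) * s) := by
  have hb0 : 0 < b := one_pos.trans hb
  have hr : b ^ (-s) < 1 := rpow_lt_one_of_one_lt_of_neg hb (neg_neg_of_pos hs)
  refine ((summable_geometric_of_lt_one (rpow_nonneg hb0.le _) hr).mul_left (b ^ (-k * s))).congr
    fun j => ?_
  rw [← rpow_natCast, ← rpow_mul hb0.le, ← rpow_add hb0]
  ring_nf

theorem tendsto_div_two_pow_nhdsGT_zero {c : ℝ} (hc : 0 < c) :
    Tendsto (fun n : ℕ => c / 2 ^ n) atTop (𝓝[>] 0) :=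
  tendsto_nhdsWithin_iff.2 ⟨tendsto_const_nhds.div_atTop
    (tendsto_pow_atTop_atTop_of_one_lt one_lt_two),
    Eventually.of_forall fun _ => Set.mem_Ioi.2 (by positivity)⟩

theorem intervalIntegral.integral_abs_le_rpow_mul_integral_abs_rpow {g : ℝ → ℝ} {a b p : ℝ}
    (hab : a ≤ b) (hg : ContinuousOn g (Set.Icc a b)) (hp : 1 ≤ p) :
    ∫ x in a..b, |g x| ≤ (b - a) ^ (1 - 1 / p) * (∫ x in a..b, |g x| ^ p) ^ (1 / p) := by
  rcases hp.eq_or_lt with rfl | hp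
  · simp
  set μ := volume.restrict (Set.Ioc a b)
  have : IsFiniteMeasure μ := isFiniteMeasure_restrict.2 measure_Ioc_lt_top.ne
  obtain ⟨C, hC⟩ := isCompact_Icc.exists_bound_of_continuousOn hg
  have hgμ : MemLp (fun x => |g x|) (ENNReal.ofReal p) μ :=
    MemLp.of_bound ((hg.abs.mono Set.Ioc_subset_Icc_self).aestronglyMeasurable measurableSet_Ioc) C
      ((ae_restrict_iff' measurableSet_Ioc).2 <| ae_of_all _ fun x hx => by
        simpa using hC x (Set.Ioc_subset_Icc_self hx))
  have hpq := Real.HolderConjugate.conjExponent hp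
  have := integral_mul_le_Lp_mul_Lq_of_nonneg hpq (ae_of_all _ fun x => abs_nonneg (g x))
    (ae_of_all _ fun _ => zero_le_one) hgμ (memLp_const 1)
  simp only [mul_one, one_rpow] at this
  rw [intervalIntegral.integral_of_le hab, intervalIntegral.integral_of_le hab, mul_comm]
  convert this using 2
  rw [MeasureTheory.integral_const, smul_eq_mul, mul_one, measureReal_restrict_apply_univ,
    Real.volume_real_Ioc_of_le hab, one_div, one_div, ← hpq.inv_add_inv_eq_one,
    add_sub_cancel_left]

theorem integral_cos_intCast_mul_sub {k : ℤ} (hk : k ≠ 0) (τ : ℝ) :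
    ∫ x in (0:ℝ)..2 * π, cos (k * (x - τ)) = 0 := by
  simp_rw [mul_sub]
  rw [intervalIntegral.integral_comp_mul_sub (fun x => cos x) (Int.cast_ne_zero.mpr hk),
    integral_cos, sub_eq_neg_add (k * (2 * π)), sin_add_int_mul_two_pi]
  simp

theorem integral_cos_natCast_mul_sub_mul_cos {k l : ℕ} (hl : l ≠ 0) (τ : ℝ) :
    ∫ x in (0:ℝ)..2 * π, cos (k * (x - τ)) * cos (l * (x - τ)) = if k = l then π else 0 := by
  have h2 : ∀ x, cos (k * (x - τ)) * cos (l * (x - τ))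
      = (cos (((k - l : ℤ) : ℝ) * (x - τ)) + cos (((k + l : ℤ) : ℝ) * (x - τ))) / 2 := by
    intro x
    rw [eq_div_iff two_ne_zero, ← mul_comm 2, ← mul_assoc, two_mul_cos_mul_cos]
    push_cast
    ring_nf
  have hint : ∀ m : ℤ, IntervalIntegrable (fun x => cos (m * (x - τ))) volume 0 (2 * π) :=
    fun m => (by fun_prop : Continuous _).intervalIntegrable _ _
  simp_rw [h2]
  rw [intervalIntegral.integral_div, intervalIntegral.integral_add (hint _) (hint _),
    integral_cos_intCast_mul_sub (k := k + l) (by omega)]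
  split_ifs with h
  · simp [h]
  · rw [integral_cos_intCast_mul_sub (by omega)]
    simp

noncomputable def cosSeries (c : ℕ → ℝ) (ω : ℕ → ℕ) (τ x : ℝ) : ℝ :=
  ∑' j, c j * cos (ω j * (x - τ))

section cosSeries

variable {c : ℕ → ℝ} {ω : ℕ → ℕ}

theorem continuous_cosSeries (hc : Summable c) (τ : ℝ) :
    Continuous (cosSeries c ω τ) :=
  continuous_tsum (fun j => by fun_prop) hc.abs fun j x => abs_mul_cos_le _ _

theorem integral_cosSeries_mul_cos (hc : Summable c) (hω : Function.Injective ω) (τ : ℝ)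
    {m : ℕ} (hm : ω m ≠ 0) :
    ∫ x in (0:ℝ)..2 * π, cosSeries c ω τ x * cos (ω m * (x - τ)) = π * c m := by
  have hsum : ∀ x, HasSum (fun j => c j * cos (ω j * (x - τ)) * cos (ω m * (x - τ)))
      (cosSeries c ω τ x * cos (ω m * (x - τ))) := fun x =>
    (hc.mul_of_abs_le_one fun j => abs_cos_le_one _).hasSum.mul_right _
  have hterm : ∀ j, ∫ x in (0:ℝ)..2 * π, c j * cos (ω j * (x - τ)) * cos (ω m * (x - τ))
      = if j = m then π * c m else 0 := by
    intro j
    simp_rw [mul_assoc]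
    rw [intervalIntegral.integral_const_mul, integral_cos_natCast_mul_sub_mul_cos hm]
    simp only [hω.eq_iff, mul_ite, mul_zero]
    split_ifs with h
    · rw [h, mul_comm]
    · rfl
  have := intervalIntegral.hasSum_integral_of_dominated_convergence (μ := volume) (a := 0)
    (b := 2 * π) (fun j _ => |c j|) (fun j => (by fun_prop : Continuous _).aestronglyMeasurable)
    (fun j => ae_of_all _ fun x _ => (abs_mul_cos_le _ _).trans (abs_mul_cos_le _ _))
    (ae_of_all _ fun _ _ => hc.abs) intervalIntegrable_const (ae_of_all _ fun x _ => hsum x)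
  simp_rw [hterm] at this
  exact this.unique (hasSum_ite_eq m _)

theorem pi_mul_abs_le_integral_abs_cosSeries (hc : Summable c) (hω : Function.Injective ω)
    (τ : ℝ) {m : ℕ} (hm : ω m ≠ 0) :
    π * |c m| ≤ ∫ x in (0:ℝ)..2 * π, |cosSeries c ω τ x| := by
  have hG : Continuous (cosSeries c ω τ) := continuous_cosSeries hc τ
  calc π * |c m|
      = |∫ x in (0:ℝ)..2 * π, cosSeries c ω τ x * cos (ω m * (x - τ))| := by
        rw [integral_cosSeries_mul_cos hc hω τ hm, abs_mul, abs_of_pos pi_pos]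
    _ ≤ ∫ x in (0:ℝ)..2 * π, |cosSeries c ω τ x * cos (ω m * (x - τ))| :=
        intervalIntegral.abs_integral_le_integral_abs two_pi_pos.le
    _ ≤ ∫ x in (0:ℝ)..2 * π, |cosSeries c ω τ x| :=
        intervalIntegral.integral_mono_on two_pi_pos.le
          (((hG.mul (by fun_prop)).abs).intervalIntegrable _ _) (hG.abs.intervalIntegrable _ _)
          fun x _ => abs_mul_cos_le _ _

theorem two_pi_rpow_mul_abs_div_two_le_integral_abs_cosSeries_rpow (hc : Summable c)
    (hω : Function.Injective ω) (τ : ℝ) {m : ℕ} (hm : ω m ≠ 0) {p : ℝ} (hp : 1 ≤ p) :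
    (2 * π) ^ (1 / p) * |c m| / 2 ≤ (∫ x in (0:ℝ)..2 * π, |cosSeries c ω τ x| ^ p) ^ (1 / p) := by
  have key := (pi_mul_abs_le_integral_abs_cosSeries hc hω τ hm).trans
    (intervalIntegral.integral_abs_le_rpow_mul_integral_abs_rpow two_pi_pos.le
      (continuous_cosSeries hc τ).continuousOn hp)
  rw [sub_zero] at key
  have h2π : (2 * π) ^ (1 / p) * (2 * π) ^ (1 - 1 / p) = 2 * π := by
    rw [← rpow_add two_pi_pos, add_sub_cancel, rpow_one]
  refine le_of_mul_le_mul_left ?_ two_pi_pos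
  linear_combination mul_le_mul_of_nonneg_left key (by positivity : 0 ≤ (2 * π) ^ (1 / p))
    + (∫ x in (0:ℝ)..2 * π, |cosSeries c ω τ x| ^ p) ^ (1 / p) * h2π

end cosSeries

theorem abs_exp_le_one_of_nonpos {x : ℝ} (hx : x ≤ 0) : |exp x| ≤ 1 := by
  rw [abs_of_pos (exp_pos x)]
  exact exp_le_one_iff.2 hx

theorem abs_exp_sub_one_le_one_of_nonpos {x : ℝ} (hx : x ≤ 0) : |exp x - 1| ≤ 1 := by
  rw [abs_of_nonpos (by simpa using hx)]
  linarith [exp_pos x]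

theorem tsum_mul_mul_cos_sub_tsum_mul_cos {a e θ : ℕ → ℝ} (ha : Summable a)
    (he : ∀ j, |e j| ≤ 1) :
    ∑' j, a j * e j * cos (θ j) - ∑' j, a j * cos (θ j) = ∑' j, a j * (e j - 1) * cos (θ j) := by
  rw [← ((ha.mul_of_abs_le_one he).mul_of_abs_le_one fun j => abs_cos_le_one _).tsum_sub
    (ha.mul_of_abs_le_one fun j => abs_cos_le_one _)]
  exact tsum_congr fun j => by ring

theorem two_pi_rpow_mul_one_sub_exp_neg_one_le {s ε τ p : ℝ} (hs : 0 < s) (hε : 0 ≤ ε)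
    (hτ : 0 ≤ τ) (hp : 1 ≤ p) {n : ℕ} (hn : 3 ≤ n) (hετ : ε * (121 / 64) * 2 ^ (2 * n) * τ = 1) :
    (2 * π) ^ (1 / p) * (1 - exp (-1)) / 2 ≤ (2 : ℝ) ^ ((n : ℝ) * s) *
      (∫ x in (0:ℝ)..2 * π, |∑' j : ℕ, (2 : ℝ) ^ (-((j : ℝ) + 3) * s)
          * exp (-ε * (121 / 64) * 2 ^ (2 * (j + 3)) * τ) * cos ((11 / 8) * 2 ^ (j + 3) * (x - τ))
        - ∑' j : ℕ, (2 : ℝ) ^ (-((j : ℝ) + 3) * s) * cos ((11 / 8) * 2 ^ (j + 3) * (x - τ))| ^ p)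
        ^ (1 / p) := by
  have hexp : ∀ j : ℕ, -ε * (121 / 64) * 2 ^ (2 * (j + 3)) * τ ≤ 0 := fun j => by
    have : 0 ≤ ε * (121 / 64) * 2 ^ (2 * (j + 3)) * τ := by positivity
    linarith
  set c : ℕ → ℝ := fun j =>
    (2 : ℝ) ^ (-((j : ℝ) + 3) * s) * (exp (-ε * (121 / 64) * 2 ^ (2 * (j + 3)) * τ) - 1)
  have ha := summable_rpow_neg_add_mul one_lt_two hs 3
  have hc : Summable c := ha.mul_of_abs_le_one fun j => abs_exp_sub_one_le_one_of_nonpos (hexp j)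
  have hω : Function.Injective fun j : ℕ => 11 * 2 ^ j := fun i j h =>
    Nat.pow_right_injective le_rfl (Nat.eq_of_mul_eq_mul_left (by norm_num) h)
  have hcm : |c (n - 3)| = 2 ^ (-((n : ℝ) * s)) * (1 - exp (-1)) := by
    have hm : n - 3 + 3 = n := Nat.sub_add_cancel hn
    simp only [c]
    rw [hm, show -ε * (121 / 64) * 2 ^ (2 * n) * τ = -1 by linear_combination -hετ, abs_mul,
      abs_of_pos (by positivity), abs_of_neg (by simp), neg_sub, Nat.cast_sub hn]
    ring_nf
  have key := two_pi_rpow_mul_abs_div_two_le_integral_abs_cosSeries_rpow hc hω τ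
    (m := n - 3) (by positivity) hp
  simp only [hcm, cosSeries] at key
  have h2 : (2 : ℝ) ^ ((n : ℝ) * s) * 2 ^ (-((n : ℝ) * s)) = 1 := by
    rw [← rpow_add two_pos, add_neg_cancel, rpow_zero]
  have hG : ∀ x, ∑' j : ℕ, (2 : ℝ) ^ (-((j : ℝ) + 3) * s)
        * exp (-ε * (121 / 64) * 2 ^ (2 * (j + 3)) * τ) * cos ((11 / 8) * 2 ^ (j + 3) * (x - τ))
      - ∑' j : ℕ, (2 : ℝ) ^ (-((j : ℝ) + 3) * s) * cos ((11 / 8) * 2 ^ (j + 3) * (x - τ))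
      = ∑' j, c j * cos (((11 * 2 ^ j : ℕ) : ℝ) * (x - τ)) := fun x => by
    rw [tsum_mul_mul_cos_sub_tsum_mul_cos ha fun j => abs_exp_le_one_of_nonpos (hexp j)]
    congr! 3 with j
    push_cast
    ring_nf
  simp only [hG]
  linear_combination mul_le_mul_of_nonneg_left key (by positivity : (0 : ℝ) ≤ 2 ^ ((n : ℝ) * s))
    - (2 * π) ^ (1 / p) * (1 - exp (-1)) / 2 * h2

/-- For `s > 0`, `t_n = 8π/(11·2^n)`, `ε_n = (8/(11π))·2^{-n}`,
`f(x) = Σ_{j=3}^∞ 2^{-js} cos((11/8)·2^j·x)` and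
`F_n(t,x) = Σ_{j=3}^∞ 2^{-js} e^{-ε_n(121/64)·2^{2j}·t} cos((11/8)·2^j·(x-t))`:
for every `1 ≤ p < ∞` and `n ≥ 3`,
`2^{ns} ‖F_n(t_n,·) - f(·-t_n)‖_{L^p(0,2π)} ≥ (2π)^{1/p}·(1 - e^{-1})/2`,
even though `t_n → 0⁺` and `ε_n → 0⁺`. -/
theorem stmt_17 (s : ℝ) (hs : 0 < s) (f : ℝ → ℝ)
    (hf : ∀ x : ℝ, f x = ∑' j : ℕ,
      (2 : ℝ) ^ (-(((j : ℝ) + 3)) * s) * Real.cos ((11 / 8) * 2 ^ (j + 3) * x))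
    (t ε : ℕ → ℝ)
    (ht : ∀ n, t n = 8 * π / (11 * 2 ^ n))
    (hε : ∀ n, ε n = (8 / (11 * π)) * 2 ^ (-(n : ℤ)))
    (F : ℕ → ℝ → ℝ → ℝ)
    (hF : ∀ (n : ℕ) (τ x : ℝ), F n τ x = ∑' j : ℕ,
      (2 : ℝ) ^ (-(((j : ℝ) + 3)) * s)
        * Real.exp (-(ε n) * (121 / 64) * 2 ^ (2 * (j + 3)) * τ)
        * Real.cos ((11 / 8) * 2 ^ (j + 3) * (x - τ))) :
    (∀ p : ℝ, 1 ≤ p → ∀ n : ℕ, 3 ≤ n →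
      (2 : ℝ) ^ ((n : ℝ) * s)
          * (∫ x in (0:ℝ)..(2 * π), |F n (t n) x - f (x - t n)| ^ p) ^ (1 / p)
        ≥ (2 * π) ^ (1 / p) * (1 - Real.exp (-1)) / 2) ∧
    Tendsto t atTop (nhdsWithin 0 (Set.Ioi 0)) ∧
    Tendsto ε atTop (nhdsWithin 0 (Set.Ioi 0)) := by
  have htn : ∀ n, t n = 8 * π / 11 / 2 ^ n := fun n => by rw [ht, div_div]
  have hεn : ∀ n, ε n = 8 / (11 * π) / 2 ^ n := fun n => by
    rw [hε, zpow_neg, zpow_natCast, ← div_eq_mul_inv]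
  refine ⟨fun p hp n hn => ?_, funext htn ▸ tendsto_div_two_pow_nhdsGT_zero (by positivity),
    funext hεn ▸ tendsto_div_two_pow_nhdsGT_zero (by positivity)⟩
  have hετ : ε n * (121 / 64) * 2 ^ (2 * n) * t n = 1 := by
    rw [htn, hεn, pow_mul']
    field_simp
    ring
  simp only [hF, hf]
  exact two_pi_rpow_mul_one_sub_exp_neg_one_le hs (by rw [hεn]; positivity)
    (by rw [htn]; positivity) hp hn hετ
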